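/- Let (b, B, m, μ) be an admissible parameter set. Then for every k ∈ ℕ and every u ∈ K one has ‖R^{(k)}(u) − R(u)‖ ≤ ‖μ({ξ ∈ K : 0 < ‖ξ‖ ≤ 1/k})‖ · ‖u‖². Consequently, for every M > 0, sup over u ∈ K with ‖u‖ ≤ M of ‖R^{(k)}(u) − R(u)‖ tends to 0 as k → ∞. -/

import Mathlib

open MeasureTheory Filter
open scoped RealInnerProductSpace Topology ENNReal

noncomputable section

def IsSelfDualCone {H : Type*} [NormedAddCommGroup H] [InnerProductSpace ℝ H]
    (K : Set H) : Prop :=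
  K = {x : H | ∀ y ∈ K, 0 ≤ ⟪x, y⟫}

def trunc {H : Type*} [NormedAddCommGroup H] [InnerProductSpace ℝ H] (ξ : H) : H :=
  if ‖ξ‖ ≤ 1 then ξ else 0

structure AdmissibleParams (H : Type*) [NormedAddCommGroup H] [InnerProductSpace ℝ H]
    [CompleteSpace H] [MeasurableSpace H] [BorelSpace H] (K : Set H) where
  b : H
  B : H →L[ℝ] H
  m : Measure H
  ν : H → Measure H
  muVec : Set H → H
  m_support : m ((K \ {0})ᶜ) = 0
  m_sq : IntegrableOn (fun ξ : H => ‖ξ‖ ^ 2) (K \ {0}) m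
  m_chi : ∀ h : H, IntegrableOn (fun ξ : H => |⟪trunc ξ, h⟫|) (K \ {0}) m
  m_Im : ∃ Im : H, ∀ h : H, ⟪Im, h⟫ = ∫ ξ in K \ {0}, ⟪trunc ξ, h⟫ ∂m
  b_drift : ∀ v ∈ K, 0 ≤ ⟪b, v⟫ - ∫ ξ in K \ {0}, ⟪trunc ξ, v⟫ ∂m
  ν_finite : ∀ x ∈ K, IsFiniteMeasure (ν x)
  ν_support : ∀ x ∈ K, ν x ((K \ {0})ᶜ) = 0
  ν_add : ∀ x ∈ K, ∀ y ∈ K, ν (x + y) = ν x + ν y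
  ν_smul : ∀ x ∈ K, ∀ c : ℝ, 0 ≤ c → ν (c • x) = ENNReal.ofReal c • ν x
  ν_int : ∀ u ∈ K, ∀ x ∈ K, ⟪u, x⟫ = 0 →
    IntegrableOn (fun ξ : H => ⟪trunc ξ, u⟫ / ‖ξ‖ ^ 2) (K \ {0}) (ν x)
  B_quasi : ∀ u ∈ K, ∀ x ∈ K, ⟪u, x⟫ = 0 →
    0 ≤ ⟪ContinuousLinearMap.adjoint B u, x⟫
      - ∫ ξ in K \ {0}, ⟪trunc ξ, u⟫ / ‖ξ‖ ^ 2 ∂(ν x)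
  muVec_mem : ∀ S : Set H, MeasurableSet S → muVec S ∈ K
  muVec_spec : ∀ S : Set H, MeasurableSet S → ∀ x ∈ K, ⟪muVec S, x⟫ = (ν x S).toReal

/-!
Write `S_k = {ξ ∈ K : 0 < ‖ξ‖ ≤ 1/k}`. On `S_k` the truncation is the identity and `⟪ξ, u⟫ ≥ 0`,
so the integrand `(exp (-⟪ξ, u⟫) - 1 + ⟪ξ, u⟫) / ‖ξ‖²` lies between `0` and `‖u‖²`. Testing against
`x ∈ K` thus gives `0 ≤_K R^{(k)}(u) - R(u) ≤_K ‖u‖² μ(S_k)`, and in a self-dual cone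
`0 ≤_K w ≤_K v` forces `‖w‖² ≤ ⟪w, v⟫ ≤ ‖w‖ ‖v‖`. For the uniform statement, `μ(S_k) ≤_K μ(S_1)`
gives `‖μ(S_k)‖² ≤ ν_{μ(S_1)}(S_k)`, which tends to `0` by continuity from above of a finite measure.
-/

namespace IsSelfDualCone

variable {H : Type*} [NormedAddCommGroup H] [InnerProductSpace ℝ H] {K : Set H}

theorem mem_iff (hK : IsSelfDualCone K) {x : H} : x ∈ K ↔ ∀ y ∈ K, 0 ≤ ⟪x, y⟫ := by
  conv_lhs => rw [hK]
  rfl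

theorem inner_nonneg (hK : IsSelfDualCone K) {x y : H} (hx : x ∈ K) (hy : y ∈ K) :
    0 ≤ ⟪x, y⟫ :=
  hK.mem_iff.1 hx y hy

theorem isClosed (hK : IsSelfDualCone K) : IsClosed K := by
  have : {x : H | ∀ y ∈ K, 0 ≤ ⟪x, y⟫} = ⋂ y ∈ K, {x : H | 0 ≤ ⟪x, y⟫} := by ext; simp
  rw [hK, this]
  exact isClosed_biInter fun y _ => isClosed_le continuous_const (by fun_prop)

theorem norm_sq_le_inner (hK : IsSelfDualCone K) {v w : H} (hw : w ∈ K) (hvw : v - w ∈ K) :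
    ‖w‖ ^ 2 ≤ ⟪w, v⟫ := by
  have := hK.inner_nonneg hw hvw
  rw [inner_sub_right, real_inner_self_eq_norm_sq] at this
  linarith

theorem norm_le_of_sub_mem (hK : IsSelfDualCone K) {v w : H} (hw : w ∈ K) (hvw : v - w ∈ K) :
    ‖w‖ ≤ ‖v‖ := by
  have h := (hK.norm_sq_le_inner hw hvw).trans (real_inner_le_norm w v)
  rw [sq] at h
  rcases (norm_nonneg w).eq_or_lt with h0 | h0
  · rw [← h0]; exact norm_nonneg v
  · exact le_of_mul_le_mul_left h h0

end IsSelfDualCone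

theorem Real.exp_neg_sub_one_add_nonneg (t : ℝ) : 0 ≤ Real.exp (-t) - 1 + t := by
  linarith [Real.add_one_le_exp (-t)]

theorem Real.exp_neg_sub_one_add_le_sq {t : ℝ} (ht : 0 ≤ t) : Real.exp (-t) - 1 + t ≤ t ^ 2 := by
  have h1 : t + 1 ≤ Real.exp t := Real.add_one_le_exp t
  have h2 : Real.exp (-t) * Real.exp t = 1 := by rw [← Real.exp_add]; simp
  nlinarith [Real.exp_nonneg (-t)]

section Integrand

variable {H : Type*} [NormedAddCommGroup H] [InnerProductSpace ℝ H] {K : Set H}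

def jumpIntegrand (u ξ : H) : ℝ :=
  (Real.exp (-⟪ξ, u⟫) - 1 + ⟪trunc ξ, u⟫) / ‖ξ‖ ^ 2

theorem measurable_trunc [MeasurableSpace H] [OpensMeasurableSpace H] :
    Measurable (trunc : H → H) :=
  Measurable.ite (measurableSet_le measurable_norm measurable_const) measurable_id
    measurable_const

theorem measurable_jumpIntegrand [MeasurableSpace H] [OpensMeasurableSpace H] (u : H) :
    Measurable (jumpIntegrand u) := by
  have hinner : Measurable fun ξ : H => ⟪ξ, u⟫ := (continuous_id.inner continuous_const).measurable
  exact (((Real.measurable_exp.comp hinner.neg).sub measurable_const).add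
    (hinner.comp measurable_trunc)).div (measurable_norm.pow_const 2)

theorem jumpIntegrand_nonneg {u ξ : H} (hξ : ‖ξ‖ ≤ 1) : 0 ≤ jumpIntegrand u ξ := by
  rw [jumpIntegrand, trunc, if_pos hξ]
  exact div_nonneg (Real.exp_neg_sub_one_add_nonneg _) (by positivity)

theorem jumpIntegrand_le_norm_sq (hK : IsSelfDualCone K) {u ξ : H} (hu : u ∈ K) (hξK : ξ ∈ K)
    (hξ : ‖ξ‖ ≤ 1) : jumpIntegrand u ξ ≤ ‖u‖ ^ 2 := by
  rw [jumpIntegrand, trunc, if_pos hξ]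
  refine div_le_of_le_mul₀ (by positivity) (by positivity) ?_
  have hcs : ⟪ξ, u⟫ ^ 2 ≤ (‖ξ‖ * ‖u‖) ^ 2 :=
    sq_le_sq' (neg_le_of_abs_le (abs_real_inner_le_norm ξ u)) (real_inner_le_norm ξ u)
  linarith [Real.exp_neg_sub_one_add_le_sq (hK.inner_nonneg hξK hu)]

theorem abs_jumpIntegrand_le (hK : IsSelfDualCone K) {u ξ : H} (hu : u ∈ K) (hξK : ξ ∈ K) :
    |jumpIntegrand u ξ| ≤ max 1 (‖u‖ ^ 2) := by
  by_cases hξ : ‖ξ‖ ≤ 1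
  · rw [abs_of_nonneg (jumpIntegrand_nonneg hξ)]
    exact (jumpIntegrand_le_norm_sq hK hu hξK hξ).trans (le_max_right _ _)
  · have hexp : |Real.exp (-⟪ξ, u⟫) - 1| ≤ 1 := by
      have := Real.exp_le_one_iff.mpr (neg_nonpos.mpr (hK.inner_nonneg hξK hu))
      rw [abs_le]
      constructor <;> linarith [Real.exp_nonneg (-⟪ξ, u⟫)]
    have hξ1 : 1 ≤ ‖ξ‖ ^ 2 := one_le_pow₀ (not_le.mp hξ).le
    rw [jumpIntegrand, trunc, if_neg hξ, inner_zero_left, add_zero, abs_div,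
      abs_of_pos (by positivity : (0 : ℝ) < ‖ξ‖ ^ 2)]
    exact ((div_le_one (by positivity)).mpr (hexp.trans hξ1)).trans (le_max_left _ _)

theorem integrableOn_jumpIntegrand [MeasurableSpace H] [OpensMeasurableSpace H]
    (hK : IsSelfDualCone K) {ν : Measure H} [IsFiniteMeasure ν] {u : H} (hu : u ∈ K) :
    IntegrableOn (jumpIntegrand u) K ν := by
  refine ⟨(measurable_jumpIntegrand u).aestronglyMeasurable,
    HasFiniteIntegral.of_bounded (C := max 1 (‖u‖ ^ 2)) ?_⟩
  filter_upwards [ae_restrict_mem hK.isClosed.measurableSet] with ξ hξ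
  exact abs_jumpIntegrand_le hK hu hξ

end Integrand

section PuncturedConeBall

variable {H : Type*} [NormedAddCommGroup H] {K : Set H}

def puncturedConeBall (K : Set H) (r : ℝ) : Set H :=
  {ξ | ξ ∈ K ∧ 0 < ‖ξ‖ ∧ ‖ξ‖ ≤ r}

theorem puncturedConeBall_subset_cone (r : ℝ) : puncturedConeBall K r ⊆ K :=
  fun _ hξ => hξ.1

theorem puncturedConeBall_mono {r s : ℝ} (hrs : r ≤ s) :
    puncturedConeBall K r ⊆ puncturedConeBall K s :=
  fun _ ⟨hξK, hξ0, hξr⟩ => ⟨hξK, hξ0, hξr.trans hrs⟩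

theorem biInter_puncturedConeBall : ⋂ r > 0, puncturedConeBall K r = ∅ := by
  refine Set.eq_empty_of_forall_notMem fun ξ hξ => ?_
  have hξ0 : 0 < ‖ξ‖ := (Set.mem_iInter₂.mp hξ 1 one_pos).2.1
  exact (half_lt_self hξ0).not_ge (Set.mem_iInter₂.mp hξ _ (half_pos hξ0)).2.2

theorem diff_setOf_lt_norm_eq_puncturedConeBall (r : ℝ) :
    (K \ {0}) \ {ξ | r < ‖ξ‖} = puncturedConeBall K r := by
  ext ξ
  simp only [Set.mem_sdiff, Set.mem_singleton_iff, Set.mem_ofPred_eq, not_lt, puncturedConeBall,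
    norm_pos_iff]
  tauto

variable [MeasurableSpace H] [OpensMeasurableSpace H]

theorem measurableSet_puncturedConeBall (hK : MeasurableSet K) (r : ℝ) :
    MeasurableSet (puncturedConeBall K r) :=
  hK.inter ((measurableSet_lt measurable_const measurable_norm).inter
    (measurableSet_le measurable_norm measurable_const))

theorem tendsto_measure_puncturedConeBall (hK : MeasurableSet K) (ν : Measure H)
    [IsFiniteMeasure ν] : Tendsto (fun r => ν (puncturedConeBall K r)) (𝓝[>] 0) (𝓝 0) := by
  have h := tendsto_measure_biInter_gt (μ := ν) (s := puncturedConeBall K) (a := 0)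
    (fun r _ => (measurableSet_puncturedConeBall hK r).nullMeasurableSet)
    (fun _ _ _ hij => puncturedConeBall_mono hij) ⟨1, one_pos, measure_ne_top _ _⟩
  rwa [biInter_puncturedConeBall, measure_empty] at h

theorem setIntegral_sub_setIntegral_inter_eq {ν : Measure H}
    {f : H → ℝ} (hf : IntegrableOn f (K \ {0}) ν) (r : ℝ) :
    ∫ ξ in K \ {0}, f ξ ∂ν - ∫ ξ in (K \ {0}) ∩ {ξ | r < ‖ξ‖}, f ξ ∂ν
      = ∫ ξ in puncturedConeBall K r, f ξ ∂ν := by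
  rw [← integral_inter_add_sdiff (measurableSet_lt measurable_const measurable_norm) hf,
    diff_setOf_lt_norm_eq_puncturedConeBall]
  ring

end PuncturedConeBall

namespace AdmissibleParams

variable {H : Type*} [NormedAddCommGroup H] [InnerProductSpace ℝ H] [CompleteSpace H]
  [MeasurableSpace H] [BorelSpace H] {K : Set H}

theorem norm_le_norm_muVec_mul_of_inner_eq (hK : IsSelfDualCone K) (p : AdmissibleParams H K)
    {u w : H} (hu : u ∈ K) {r : ℝ} (hr : r ≤ 1)
    (hw : ∀ x ∈ K, ⟪w, x⟫ = ∫ ξ in puncturedConeBall K r, jumpIntegrand u ξ ∂p.ν x) :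
    ‖w‖ ≤ ‖p.muVec (puncturedConeBall K r)‖ * ‖u‖ ^ 2 := by
  set S := puncturedConeBall K r
  have hS : MeasurableSet S := measurableSet_puncturedConeBall hK.isClosed.measurableSet r
  have hw_mem : w ∈ K := hK.mem_iff.2 fun x hx =>
    (hw x hx).symm ▸ setIntegral_nonneg hS fun ξ hξ => jumpIntegrand_nonneg (hξ.2.2.trans hr)
  have hw_le : ∀ x ∈ K, ⟪w, x⟫ ≤ ⟪‖u‖ ^ 2 • p.muVec S, x⟫ := by
    intro x hx
    have := p.ν_finite x hx
    rw [hw x hx, real_inner_smul_left, p.muVec_spec S hS x hx, mul_comm]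
    calc ∫ ξ in S, jumpIntegrand u ξ ∂p.ν x
        ≤ ∫ _ in S, ‖u‖ ^ 2 ∂p.ν x :=
          setIntegral_mono_on
            ((integrableOn_jumpIntegrand hK hu).mono_set (puncturedConeBall_subset_cone r))
            (integrableOn_const (measure_ne_top _ _)) hS
            fun ξ hξ => jumpIntegrand_le_norm_sq hK hu hξ.1 (hξ.2.2.trans hr)
      _ = (p.ν x S).toReal * ‖u‖ ^ 2 := by rw [setIntegral_const, smul_eq_mul, measureReal_def]
  have hsub_mem : ‖u‖ ^ 2 • p.muVec S - w ∈ K := hK.mem_iff.2 fun x hx => by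
    rw [inner_sub_left, sub_nonneg]
    exact hw_le x hx
  calc ‖w‖ ≤ ‖‖u‖ ^ 2 • p.muVec S‖ := hK.norm_le_of_sub_mem hw_mem hsub_mem
    _ = ‖p.muVec S‖ * ‖u‖ ^ 2 := by rw [norm_smul, norm_pow, norm_norm, mul_comm]

theorem norm_muVec_puncturedConeBall_sq_le (hK : IsSelfDualCone K) (p : AdmissibleParams H K)
    {r : ℝ} (hr : r ≤ 1) :
    ‖p.muVec (puncturedConeBall K r)‖ ^ 2
      ≤ (p.ν (p.muVec (puncturedConeBall K 1)) (puncturedConeBall K r)).toReal := by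
  have hKm := hK.isClosed.measurableSet
  have hSr := measurableSet_puncturedConeBall hKm r
  have hS1 := measurableSet_puncturedConeBall hKm 1
  have hsub_mem : p.muVec (puncturedConeBall K 1) - p.muVec (puncturedConeBall K r) ∈ K :=
    hK.mem_iff.2 fun x hx => by
      have := p.ν_finite x hx
      rw [inner_sub_left, p.muVec_spec _ hS1 x hx, p.muVec_spec _ hSr x hx, sub_nonneg]
      exact ENNReal.toReal_mono (measure_ne_top _ _) (measure_mono (puncturedConeBall_mono hr))
  calc ‖p.muVec (puncturedConeBall K r)‖ ^ 2
      ≤ ⟪p.muVec (puncturedConeBall K r), p.muVec (puncturedConeBall K 1)⟫ :=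
        hK.norm_sq_le_inner (p.muVec_mem _ hSr) hsub_mem
    _ = _ := p.muVec_spec _ hSr _ (p.muVec_mem _ hS1)

theorem tendsto_norm_muVec_puncturedConeBall (hK : IsSelfDualCone K) (p : AdmissibleParams H K) :
    Tendsto (fun k : ℕ => ‖p.muVec (puncturedConeBall K (1 / k))‖) atTop (𝓝 0) := by
  set v := p.muVec (puncturedConeBall K 1)
  have := p.ν_finite v (p.muVec_mem _ (measurableSet_puncturedConeBall hK.isClosed.measurableSet 1))
  have hinv : Tendsto (fun k : ℕ => 1 / (k : ℝ)) atTop (𝓝[>] 0) := by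
    simpa only [Function.comp_def, one_div] using
      tendsto_inv_atTop_nhdsGT_zero.comp tendsto_natCast_atTop_atTop
  have hmeas : Tendsto (fun k : ℕ => (p.ν v (puncturedConeBall K (1 / k))).toReal) atTop (𝓝 0) :=
    (ENNReal.tendsto_toReal_zero_iff fun _ => measure_ne_top _ _).2
      ((tendsto_measure_puncturedConeBall hK.isClosed.measurableSet _).comp hinv)
  refine squeeze_zero (fun _ => norm_nonneg _) (fun k => ?_) (Real.sqrt_zero ▸ hmeas.sqrt)
  rw [Real.le_sqrt (norm_nonneg _) ENNReal.toReal_nonneg]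
  exact norm_muVec_puncturedConeBall_sq_le hK p (one_div (k : ℝ) ▸ Nat.cast_inv_le_one k)

end AdmissibleParams

theorem stmt_5_general {H : Type*} [NormedAddCommGroup H] [InnerProductSpace ℝ H] [CompleteSpace H]
    [MeasurableSpace H] [BorelSpace H] (K : Set H)
    (hK : IsSelfDualCone K)
    (p : AdmissibleParams H K)
    (R : H → H)
    (hR : ∀ u ∈ K, ∀ x ∈ K, ⟪R u, x⟫ =
      ⟪ContinuousLinearMap.adjoint p.B u, x⟫
        - ∫ ξ in K \ {0}, (Real.exp (-⟪ξ, u⟫) - 1 + ⟪trunc ξ, u⟫) / ‖ξ‖ ^ 2 ∂(p.ν x))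
    (Rk : ℕ → H → H)
    (hRk : ∀ k : ℕ, 0 < k → ∀ u ∈ K, ∀ x ∈ K, ⟪Rk k u, x⟫ =
      ⟪ContinuousLinearMap.adjoint p.B u, x⟫
        - ∫ ξ in (K \ {0}) ∩ {ξ : H | 1 / (k : ℝ) < ‖ξ‖},
            (Real.exp (-⟪ξ, u⟫) - 1 + ⟪trunc ξ, u⟫) / ‖ξ‖ ^ 2 ∂(p.ν x)) :
    (∀ k : ℕ, 0 < k → ∀ u ∈ K,
      ‖Rk k u - R u‖ ≤ ‖p.muVec {ξ : H | ξ ∈ K ∧ 0 < ‖ξ‖ ∧ ‖ξ‖ ≤ 1 / (k : ℝ)}‖ * ‖u‖ ^ 2) ∧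
    (∀ M : ℝ, 0 < M →
      Filter.Tendsto (fun k : ℕ => ⨆ u : {u : H // u ∈ K ∧ ‖u‖ ≤ M}, ‖Rk k u.1 - R u.1‖)
        Filter.atTop (𝓝 0)) := by
  have bound : ∀ k : ℕ, 0 < k → ∀ u ∈ K,
      ‖Rk k u - R u‖ ≤ ‖p.muVec {ξ : H | ξ ∈ K ∧ 0 < ‖ξ‖ ∧ ‖ξ‖ ≤ 1 / (k : ℝ)}‖ * ‖u‖ ^ 2 := by
    intro k hk u hu
    refine p.norm_le_norm_muVec_mul_of_inner_eq hK hu (one_div (k : ℝ) ▸ Nat.cast_inv_le_one k)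
      fun x hx => ?_
    have := p.ν_finite x hx
    rw [inner_sub_left, hRk k hk u hu x hx, hR u hu x hx, sub_sub_sub_cancel_left]
    exact setIntegral_sub_setIntegral_inter_eq
      ((integrableOn_jumpIntegrand hK hu).mono_set Set.sdiff_subset) _
  refine ⟨bound, fun M _ => ?_⟩
  refine squeeze_zero' (Eventually.of_forall fun k => Real.iSup_nonneg fun _ => norm_nonneg _) ?_
    (by simpa only [zero_mul] using (p.tendsto_norm_muVec_puncturedConeBall hK).mul_const (M ^ 2))
  filter_upwards [eventually_gt_atTop 0] with k hk
  refine Real.iSup_le (fun u => (bound k hk u.1 u.2.1).trans ?_) (by positivity)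
  exact mul_le_mul_of_nonneg_left (pow_le_pow_left₀ (norm_nonneg _) u.2.2 2) (norm_nonneg _)

/-- `‖R^{(k)}(u) − R(u)‖ ≤ ‖μ({ξ ∈ K : 0 < ‖ξ‖ ≤ 1/k})‖ ‖u‖²`, and the
supremum of `‖R^{(k)} − R‖` over norm-bounded subsets of `K` tends to `0` as `k → ∞`. -/
theorem stmt_5 {H : Type*} [NormedAddCommGroup H] [InnerProductSpace ℝ H] [CompleteSpace H]
    [MeasurableSpace H] [BorelSpace H] (K : Set H)
    (hK : IsSelfDualCone K) (hKgen : ∀ z : H, ∃ x ∈ K, ∃ y ∈ K, z = x - y)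
    (p : AdmissibleParams H K)
    (R : H → H)
    (hR : ∀ u ∈ K, ∀ x ∈ K, ⟪R u, x⟫ =
      ⟪ContinuousLinearMap.adjoint p.B u, x⟫
        - ∫ ξ in K \ {0}, (Real.exp (-⟪ξ, u⟫) - 1 + ⟪trunc ξ, u⟫) / ‖ξ‖ ^ 2 ∂(p.ν x))
    (Rk : ℕ → H → H)
    (hRk : ∀ k : ℕ, 0 < k → ∀ u ∈ K, ∀ x ∈ K, ⟪Rk k u, x⟫ =
      ⟪ContinuousLinearMap.adjoint p.B u, x⟫
        - ∫ ξ in (K \ {0}) ∩ {ξ : H | 1 / (k : ℝ) < ‖ξ‖},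
            (Real.exp (-⟪ξ, u⟫) - 1 + ⟪trunc ξ, u⟫) / ‖ξ‖ ^ 2 ∂(p.ν x)) :
    (∀ k : ℕ, 0 < k → ∀ u ∈ K,
      ‖Rk k u - R u‖ ≤ ‖p.muVec {ξ : H | ξ ∈ K ∧ 0 < ‖ξ‖ ∧ ‖ξ‖ ≤ 1 / (k : ℝ)}‖ * ‖u‖ ^ 2) ∧
    (∀ M : ℝ, 0 < M →
      Filter.Tendsto (fun k : ℕ => ⨆ u : {u : H // u ∈ K ∧ ‖u‖ ≤ M}, ‖Rk k u.1 - R u.1‖)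
        Filter.atTop (𝓝 0)) :=
  stmt_5_general K hK p R hR Rk hRk
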